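/- The ordinary generating function for the number of $12\text{-}3$-avoiding permutations of length $n$ is $U_0(x) = \sum_{k \ge 0} \frac{x^k}{(1-x)(1-2x)\cdots(1-kx)}$, i.e., the coefficient of $x^n$ in this series (which equals the Bell number $B_n$) is the number of permutations of $\{1,\dots,n\}$ avoiding $12\text{-}3$. -/

import Mathlib

open PowerSeries

def occ_12_3 (n : ℕ) (π : Equiv.Perm (Fin n)) : ℕ :=
  ((Finset.univ : Finset (Fin n × Fin n × Fin n)).filter
    (fun p => (p.2.1 : ℕ) = (p.1 : ℕ) + 1 ∧ p.2.1 < p.2.2 ∧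
      π p.1 < π p.2.1 ∧ π p.2.1 < π p.2.2)).card

def u0 (n : ℕ) : ℕ :=
  ((Finset.univ : Finset (Equiv.Perm (Fin n))).filter
    (fun π => occ_12_3 n π = 0)).card

def avoids {n : ℕ} (π : Equiv.Perm (Fin n)) : Prop :=
  ∀ i i' j : Fin n, (i' : ℕ) = (i : ℕ) + 1 → i' < j → π i < π i' → ¬ π i' < π j

instance {n : ℕ} : DecidablePred (@avoids n) :=
  fun _ => Fintype.decidableForallFintype

lemma occ_eq_zero_iff {n : ℕ} (π : Equiv.Perm (Fin n)) :
    occ_12_3 n π = 0 ↔ avoids π := by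
  rw [occ_12_3, Finset.card_eq_zero, Finset.filter_eq_empty_iff]
  constructor
  · intro h i i' j h1 h2 h3 h4
    exact h (Finset.mem_univ (i, i', j)) ⟨h1, h2, h3, h4⟩
  · rintro h ⟨i, i', j⟩ - ⟨h1, h2, h3, h4⟩
    exact h i i' j h1 h2 h3 h4

lemma u0_eq_card_avoids (n : ℕ) :
    u0 n = (Finset.univ.filter (fun π : Equiv.Perm (Fin n) => avoids π)).card := by
  rw [u0]
  congr 1
  apply Finset.filter_congr
  intro π _
  simp [occ_eq_zero_iff]

section Construction
variable {n : ℕ} (S : Finset (Fin n))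

lemma card_compl_S : Sᶜ.card = n - S.card := by
  rw [Finset.card_compl, Fintype.card_fin]

lemma cardS_le : S.card ≤ n := by
  simpa using Finset.card_le_univ S

/-- the prefix enumeration (increasing) -/
noncomputable def dEmb : Fin S.card ↪o Fin n := S.orderEmbOfFin rfl

/-- the suffix enumeration (increasing) -/
noncomputable def eEmb : Fin (n - S.card) ↪o Fin n := Sᶜ.orderEmbOfFin (card_compl_S S)

noncomputable def phiFun (σ : Equiv.Perm (Fin (n - S.card))) (i : Fin (n + 1)) : Fin (n + 1) :=
  if h : (i : ℕ) < S.card then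
    (dEmb S ⟨S.card - 1 - i, by omega⟩).castSucc
  else if h' : (i : ℕ) = S.card then Fin.last n
  else (eEmb S (σ ⟨(i : ℕ) - (S.card + 1),
    by have h2 := i.isLt; have h3 := cardS_le S; omega⟩)).castSucc

lemma dEmb_mem (i : Fin S.card) : dEmb S i ∈ S := Finset.orderEmbOfFin_mem _ _ _
lemma eEmb_mem (i : Fin (n - S.card)) : eEmb S i ∉ S := by
  exact Finset.mem_compl.mp (Finset.orderEmbOfFin_mem Sᶜ (card_compl_S S) i)

lemma phiFun_injective (σ : Equiv.Perm (Fin (n - S.card))) :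
    Function.Injective (phiFun S σ) := by
  intro a b hab
  unfold phiFun at hab
  have ha := a.isLt
  have hb := b.isLt
  split_ifs at hab with h1 h2 h3 h4 h5 h6 h7
  · -- both prefix
    have := Fin.castSucc_injective _ hab
    have := (dEmb S).injective this
    have : S.card - 1 - (a : ℕ) = S.card - 1 - (b : ℕ) := congrArg Fin.val this
    exact Fin.ext (by omega)
  · exact absurd hab (by simpa using (Fin.castSucc_lt_last _).ne)
  · -- prefix vs suffix
    have := Fin.castSucc_injective _ hab
    exact absurd (this ▸ dEmb_mem S _) (eEmb_mem S _)
  · exact absurd hab.symm (by simpa using (Fin.castSucc_lt_last _).ne)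
  · exact Fin.ext (by omega)
  · exact absurd hab (by simpa using (Fin.castSucc_lt_last _).ne.symm)
  · have := Fin.castSucc_injective _ hab
    exact absurd (this ▸ eEmb_mem S _) (by simpa using dEmb_mem S _)
  · exact absurd hab (by simpa using (Fin.castSucc_lt_last _).ne)
  · -- both suffix
    have := Fin.castSucc_injective _ hab
    have := (eEmb S).injective this
    have := σ.injective this
    have : (a : ℕ) - (S.card + 1) = (b : ℕ) - (S.card + 1) := congrArg Fin.val this
    exact Fin.ext (by omega)

noncomputable def phiPerm (σ : Equiv.Perm (Fin (n - S.card))) : Equiv.Perm (Fin (n + 1)) :=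
  Equiv.ofBijective _ (Finite.injective_iff_bijective.mp (phiFun_injective S σ))

lemma phiPerm_apply (σ : Equiv.Perm (Fin (n - S.card))) (i : Fin (n + 1)) :
    phiPerm S σ i = phiFun S σ i := rfl

end Construction

section Construction2
variable {n : ℕ} (S : Finset (Fin n)) (σ : Equiv.Perm (Fin (n - S.card)))

lemma phi_lt {i : Fin (n + 1)} (h : (i : ℕ) < S.card) :
    phiFun S σ i = (dEmb S ⟨S.card - 1 - i, by omega⟩).castSucc := dif_pos h

lemma phi_eq {i : Fin (n + 1)} (h : (i : ℕ) = S.card) :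
    phiFun S σ i = Fin.last n := by
  unfold phiFun; rw [dif_neg (by omega), dif_pos h]

lemma phi_gt {i : Fin (n + 1)} (h : S.card < (i : ℕ))
    (hh : (i : ℕ) - (S.card + 1) < n - S.card) :
    phiFun S σ i = (eEmb S (σ ⟨(i : ℕ) - (S.card + 1), hh⟩)).castSucc := by
  unfold phiFun; rw [dif_neg (by omega), dif_neg (by omega)]

lemma avoids_phi (hσ : avoids σ) : avoids (phiPerm S σ) := by
  intro i i' j h1 h2 h3 h4
  have hi' := i'.isLt
  have hj := j.isLt
  have hple := cardS_le S
  rcases lt_trichotomy ((i' : ℕ)) S.card with hc | hc | hc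
  · -- i, i' both in prefix: descent, contradicting h3
    have hi : (i : ℕ) < S.card := by omega
    rw [phiPerm_apply, phiPerm_apply, phi_lt S σ hi, phi_lt S σ hc,
      Fin.castSucc_lt_castSucc_iff, OrderEmbedding.lt_iff_lt, Fin.lt_def] at h3
    simp only at h3
    omega
  · -- i' is the position of the max
    rw [phiPerm_apply, phi_eq S σ hc] at h4
    exact absurd h4 (Fin.le_last _).not_gt
  · rcases lt_trichotomy ((i : ℕ)) S.card with hd | hd | hd
    · omega
    · -- i is the max position: h3 impossible
      rw [phiPerm_apply, phi_eq S σ hd] at h3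
      exact absurd h3 (Fin.le_last _).not_gt
    · -- all in suffix: transfer to σ
      have hcj : S.card < (j : ℕ) := by
        have := Fin.lt_def.mp h2; omega
      have e1 : (i : ℕ) - (S.card + 1) < n - S.card := by omega
      have e2 : (i' : ℕ) - (S.card + 1) < n - S.card := by omega
      have e3 : (j : ℕ) - (S.card + 1) < n - S.card := by omega
      rw [phiPerm_apply, phiPerm_apply, phi_gt S σ hd e1, phi_gt S σ hc e2,
        Fin.castSucc_lt_castSucc_iff, OrderEmbedding.lt_iff_lt] at h3
      rw [phiPerm_apply, phiPerm_apply, phi_gt S σ hc e2, phi_gt S σ hcj e3,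
        Fin.castSucc_lt_castSucc_iff, OrderEmbedding.lt_iff_lt] at h4
      refine hσ ⟨(i : ℕ) - (S.card + 1), e1⟩ ⟨(i' : ℕ) - (S.card + 1), e2⟩
        ⟨(j : ℕ) - (S.card + 1), e3⟩ ?_ ?_ h3 h4
      · simp only; omega
      · rw [Fin.lt_def]; simp only
        have := Fin.lt_def.mp h2; omega

def fS {n : ℕ} (π : Equiv.Perm (Fin (n + 1))) : Finset (Fin n) :=
  Finset.univ.filter (fun v => π.symm v.castSucc < π.symm (Fin.last n))

lemma phi_symm_last :
    (phiPerm S σ).symm (Fin.last n) = ⟨S.card, by have := cardS_le S; omega⟩ := by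
  rw [Equiv.symm_apply_eq, phiPerm_apply, phi_eq S σ rfl]

lemma fS_phi : fS (phiPerm S σ) = S := by
  ext v
  simp only [fS, Finset.mem_filter, Finset.mem_univ, true_and, phi_symm_last]
  set q := (phiPerm S σ).symm v.castSucc with hqdef
  have hq : phiPerm S σ q = v.castSucc := Equiv.apply_symm_apply _ _
  constructor
  · intro hlt
    have h1 : (q : ℕ) < S.card := Fin.lt_def.mp hlt
    rw [phiPerm_apply, phi_lt S σ h1] at hq
    have := Fin.castSucc_injective _ hq
    exact this ▸ dEmb_mem S _
  · intro hv
    rw [Fin.lt_def]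
    simp only
    by_contra hge
    push_neg at hge
    rcases eq_or_lt_of_le hge with h1 | h1
    · rw [phiPerm_apply, phi_eq S σ h1.symm] at hq
      exact absurd hq.symm (Fin.castSucc_lt_last v).ne
    · have hple := cardS_le S
      have hqlt := q.isLt
      rw [phiPerm_apply, phi_gt S σ h1 (by omega)] at hq
      have := Fin.castSucc_injective _ hq
      exact eEmb_mem S _ (this ▸ hv)

lemma phiPerm_inj : Function.Injective (phiPerm S) := by
  intro σ σ' h
  have hple := cardS_le S
  ext i
  have hi := i.isLt
  have := congrFun (congrArg (fun e : Equiv.Perm (Fin (n + 1)) => (e : Fin (n+1) → Fin (n+1))) h)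
    ⟨S.card + 1 + (i : ℕ), by omega⟩
  simp only [phiPerm_apply] at this
  rw [phi_gt S σ (by simp; omega) (by simp), phi_gt S σ' (by simp; omega) (by simp)] at this
  have h2 := (eEmb S).injective (Fin.castSucc_injective _ this)
  have h3 : (⟨S.card + 1 + (i : ℕ) - (S.card + 1), by simp⟩ : Fin (n - S.card)) = i :=
    Fin.ext (by simp)
  rw [h3] at h2
  exact congrArg Fin.val h2

end Construction2

section Surj
variable {n : ℕ} (S : Finset (Fin n))

lemma phi_surj (π : Equiv.Perm (Fin (n + 1))) (hav : avoids π) (hf : fS π = S) :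
    ∃ σ : Equiv.Perm (Fin (n - S.card)), avoids σ ∧ phiPerm S σ = π := by
  have hple := cardS_le S
  set p := S.card with hpdef
  set t := π.symm (Fin.last n) with htdef
  have hmemS : ∀ v : Fin n, v ∈ S ↔ π.symm v.castSucc < t := by
    intro v
    rw [← hf]
    simp [fS, htdef]
  -- Step 1: the position of the maximum is p
  have hlastpos : (t : ℕ) = p := by
    have key : S.image Fin.castSucc = (Finset.Iio t).image π := by
      ext x
      simp only [Finset.mem_image, Finset.mem_Iio]
      constructor
      · rintro ⟨v, hv, rfl⟩
        exact ⟨π.symm v.castSucc, (hmemS v).mp hv, Equiv.apply_symm_apply _ _⟩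
      · rintro ⟨q, hq, rfl⟩
        have hne : π q ≠ Fin.last n := by
          intro h
          have : q = t := by rw [htdef, ← h, Equiv.symm_apply_apply]
          exact absurd (this ▸ hq) (lt_irrefl t)
        refine ⟨(π q).castPred hne, ?_, Fin.castSucc_castPred _ _⟩
        rw [hmemS, Fin.castSucc_castPred, Equiv.symm_apply_apply]
        exact hq
    have c1 := congrArg Finset.card key
    rw [Finset.card_image_of_injective _ (Fin.castSucc_injective n),
      Finset.card_image_of_injective _ π.injective, Fin.card_Iio] at c1
    exact c1.symm
  have hne : ∀ q : Fin (n + 1), (q : ℕ) ≠ p → π q ≠ Fin.last n := by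
    intro q hq h
    have : q = t := by rw [htdef, ← h, Equiv.symm_apply_apply]
    exact hq (by rw [this, hlastpos])
  -- adjacent descents in the prefix
  have hdec : ∀ q : ℕ, (h : q + 1 < p) → π ⟨q + 1, by omega⟩ < π ⟨q, by omega⟩ := by
    intro q h
    rcases lt_trichotomy (π ⟨q + 1, by omega⟩) (π ⟨q, by omega⟩) with h1 | h1 | h1
    · exact h1
    · exact absurd (π.injective h1) (by intro hh; exact absurd (congrArg Fin.val hh) (by simp))
    · exfalso
      refine hav ⟨q, by omega⟩ ⟨q + 1, by omega⟩ t rfl ?_ h1 ?_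
      · rw [Fin.lt_def]; simp; omega
      · have h2 : π t = Fin.last n := Equiv.apply_symm_apply _ _
        rw [h2]
        exact Fin.lt_last_iff_ne_last.mpr (hne _ (by simp; omega))
  -- chain of descents
  have hchain : ∀ d q : ℕ, (h : q + d + 1 < p) → π ⟨q + d + 1, by omega⟩ < π ⟨q, by omega⟩ := by
    intro d
    induction d with
    | zero => intro q h; exact hdec q (by omega)
    | succ d ih =>
      intro q h
      have h1 := hdec (q + d + 1) (by omega)
      have h2 := ih q (by omega)
      calc π ⟨q + (d+1) + 1, by omega⟩ = π ⟨(q + d + 1) + 1, by omega⟩ := by congr 1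
        _ < π ⟨q + d + 1, by omega⟩ := h1
        _ < π ⟨q, by omega⟩ := h2
  -- strict decrease on the prefix
  have hmono : ∀ a b : ℕ, (hb : b < p) → (hab : a < b) → π ⟨b, by omega⟩ < π ⟨a, by omega⟩ := by
    intro a b hb hab
    have hh := hchain (b - a - 1) a (by omega)
    have e : (⟨a + (b - a - 1) + 1, by omega⟩ : Fin (n + 1)) = ⟨b, by omega⟩ :=
      Fin.ext (by simp; omega)
    rwa [e] at hh
  have hgne : ∀ i : Fin p, π ⟨p - 1 - (i : ℕ), by have := i.isLt; omega⟩ ≠ Fin.last n := by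
    intro i
    exact hne _ (by have := i.isLt; simp; omega)
  set g : Fin p → Fin n :=
    fun i => (π ⟨p - 1 - (i : ℕ), by have := i.isLt; omega⟩).castPred (hgne i) with hgdef
  have hgcast : ∀ i : Fin p, (g i).castSucc = π ⟨p - 1 - (i : ℕ), by have := i.isLt; omega⟩ :=
    fun i => Fin.castSucc_castPred _ _
  have hgmem : ∀ i, g i ∈ S := by
    intro i
    rw [hmemS, hgcast i, Equiv.symm_apply_apply, Fin.lt_def]
    have := i.isLt
    show p - 1 - (i : ℕ) < (t : ℕ)
    omega
  have hgmono : StrictMono g := by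
    intro a b hab
    have ha := a.isLt
    have hb := b.isLt
    have hh := hmono (p - 1 - (b : ℕ)) (p - 1 - (a : ℕ)) (by omega)
      (by have := Fin.lt_def.mp hab; omega)
    rw [← Fin.castSucc_lt_castSucc_iff, hgcast a, hgcast b]
    exact hh
  have hgeq : g = ⇑(dEmb S) := Finset.orderEmbOfFin_unique rfl hgmem hgmono
  have hprefix : ∀ q : Fin (n + 1), (hq : (q : ℕ) < p) →
      π q = ((dEmb S) ⟨p - 1 - (q : ℕ), by omega⟩).castSucc := by
    intro q hq
    rw [← hgeq]
    have e1 := hgcast ⟨p - 1 - (q : ℕ), by omega⟩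
    rw [e1]
    congr 1
    exact Fin.ext (by simp; omega)
  -- the suffix
  have hpos : ∀ i : Fin (n - p), p + 1 + (i : ℕ) < n + 1 := fun i => by have := i.isLt; omega
  have hqne : ∀ i : Fin (n - p), π ⟨p + 1 + (i : ℕ), hpos i⟩ ≠ Fin.last n := by
    intro i
    exact hne _ (by simp; omega)
  have hsmem : ∀ i : Fin (n - p), (π ⟨p + 1 + (i : ℕ), hpos i⟩).castPred (hqne i) ∈ Sᶜ := by
    intro i
    rw [Finset.mem_compl]
    intro hmem
    rw [hmemS, Fin.castSucc_castPred, Equiv.symm_apply_apply, Fin.lt_def, hlastpos] at hmem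
    simp at hmem
    omega
  set σf : Fin (n - p) → Fin (n - p) :=
    fun i => (Sᶜ.orderIsoOfFin (card_compl_S S)).symm ⟨_, hsmem i⟩ with hσf
  have hkey : ∀ i, ((eEmb S) (σf i)).castSucc = π ⟨p + 1 + (i : ℕ), hpos i⟩ := by
    intro i
    have e1 : (eEmb S) (σf i) = ((Sᶜ.orderIsoOfFin (card_compl_S S)) (σf i) : Fin n) :=
      (Finset.coe_orderIsoOfFin_apply _ _ _).symm
    rw [e1, hσf, OrderIso.apply_symm_apply, Fin.castSucc_castPred]
  have hσinj : Function.Injective σf := by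
    intro a b hab
    have h2 : π ⟨p + 1 + (a : ℕ), hpos a⟩ = π ⟨p + 1 + (b : ℕ), hpos b⟩ := by
      rw [← hkey, ← hkey, hab]
    have h3 := congrArg Fin.val (π.injective h2)
    simp only [Fin.val_mk] at h3
    exact Fin.ext (by omega)
  set σ : Equiv.Perm (Fin (n - p)) :=
    Equiv.ofBijective σf (Finite.injective_iff_bijective.mp hσinj) with hσdef
  have hσapp : ∀ i, σ i = σf i := fun _ => rfl
  have trans : ∀ x y : Fin (n - p), σ x < σ y ↔
      π ⟨p + 1 + (x : ℕ), hpos x⟩ < π ⟨p + 1 + (y : ℕ), hpos y⟩ := by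
    intro x y
    rw [hσapp, hσapp, ← hkey, ← hkey, Fin.castSucc_lt_castSucc_iff,
      OrderEmbedding.lt_iff_lt]
  refine ⟨σ, ?_, ?_⟩
  · intro a a' b h1 h2 h3 h4
    rw [trans] at h3 h4
    refine hav ⟨p + 1 + (a : ℕ), hpos a⟩ ⟨p + 1 + (a' : ℕ), hpos a'⟩ ⟨p + 1 + (b : ℕ), hpos b⟩
      (by simp; omega) ?_ h3 h4
    rw [Fin.lt_def]
    have := Fin.lt_def.mp h2
    simp
    omega
  · apply Equiv.ext
    intro i
    rw [phiPerm_apply]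
    rcases lt_trichotomy ((i : ℕ)) p with hi | hi | hi
    · rw [phi_lt S σ hi, hprefix i hi]
    · rw [phi_eq S σ hi]
      have e1 : i = t := Fin.ext (by rw [hlastpos]; exact hi)
      rw [e1, htdef, Equiv.apply_symm_apply]
    · have hii := i.isLt
      rw [phi_gt S σ hi (by omega), hσapp, hkey ⟨(i : ℕ) - (p + 1), by omega⟩]
      congr 1
      exact Fin.ext (by simp; omega)

end Surj

section Assembly

lemma fiber_card {n : ℕ} (S : Finset (Fin n)) :
    ((Finset.univ : Finset (Equiv.Perm (Fin (n + 1)))).filter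
      (fun π => avoids π ∧ fS π = S)).card = u0 (n - S.card) := by
  rw [u0_eq_card_avoids]
  symm
  apply Finset.card_bij (fun σ _ => phiPerm S σ)
  · intro σ hσ
    rw [Finset.mem_filter] at hσ ⊢
    exact ⟨Finset.mem_univ _, avoids_phi S σ hσ.2, fS_phi S σ⟩
  · intro σ hσ σ' hσ' h
    exact phiPerm_inj S h
  · intro π hπ
    rw [Finset.mem_filter] at hπ
    obtain ⟨σ, hσav, hσeq⟩ := phi_surj S π hπ.2.1 hπ.2.2
    exact ⟨σ, Finset.mem_filter.mpr ⟨Finset.mem_univ _, hσav⟩, hσeq⟩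

lemma u0_succ (n : ℕ) : u0 (n + 1) = ∑ j ∈ Finset.range (n + 1), n.choose j * u0 j := by
  rw [u0_eq_card_avoids,
    Finset.card_eq_sum_card_fiberwise (f := fS) (t := Finset.univ) (fun x _ => Finset.mem_univ _)]
  have e1 : ∀ S : Finset (Fin n),
      ((Finset.univ.filter (fun π : Equiv.Perm (Fin (n + 1)) => avoids π)).filter
        (fun π => fS π = S)).card = u0 (n - S.card) := by
    intro S
    rw [Finset.filter_filter]
    exact fiber_card S
  rw [Finset.sum_congr rfl fun S _ => e1 S, ← Finset.powerset_univ, Finset.sum_powerset]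
  have e2 : ∀ j, ∑ S ∈ Finset.powersetCard j (Finset.univ : Finset (Fin n)),
      u0 (n - S.card) = n.choose j * u0 (n - j) := by
    intro j
    rw [Finset.sum_powersetCard j Finset.univ (fun c => u0 (n - c)), Finset.card_univ,
      Fintype.card_fin, smul_eq_mul]
  rw [Finset.card_univ, Fintype.card_fin]
  rw [Finset.sum_congr rfl fun j _ => e2 j]
  rw [← Finset.sum_range_reflect (fun j => n.choose j * u0 (n - j)) (n + 1)]
  refine Finset.sum_congr rfl fun j hj => ?_
  have hj' : j ≤ n := by
    have := Finset.mem_range.mp hj; omega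
  have h1 : n + 1 - 1 - j = n - j := by omega
  rw [h1, Nat.choose_symm hj']
  have h2 : n - (n - j) = j := by omega
  rw [h2]

end Assembly



def stir : ℕ → ℕ → ℕ
  | 0, 0 => 1
  | 0, _ + 1 => 0
  | _ + 1, 0 => 0
  | n + 1, k + 1 => (k + 1) * stir n (k + 1) + stir n k

noncomputable def Fk (k : ℕ) : PowerSeries ℚ :=
  X ^ k * (∏ m ∈ Finset.range k, (1 - C ((m : ℚ) + 1) * X))⁻¹

lemma Fk_succ_mul (k : ℕ) :
    Fk (k + 1) * (1 - C ((k : ℚ) + 1) * X) = X * Fk k := by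
  have h1 : constantCoeff (1 - C ((k : ℚ) + 1) * X) = 1 := by simp
  have hc : (1 - C ((k : ℚ) + 1) * X)⁻¹ * (1 - C ((k : ℚ) + 1) * X) = 1 :=
    PowerSeries.inv_mul_cancel _ (by rw [h1]; norm_num)
  rw [Fk, Fk, Finset.prod_range_succ, PowerSeries.mul_inv_rev]
  linear_combination (X ^ (k + 1) *
    (∏ m ∈ Finset.range k, (1 - C ((m : ℚ) + 1) * X))⁻¹) * hc

lemma coeff_Fk (n k : ℕ) : coeff n (Fk k) = stir n k := by
  induction n generalizing k with
  | zero =>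
    cases k with
    | zero => simp [Fk, stir]
    | succ k =>
      rw [Fk]
      simp [coeff_zero_eq_constantCoeff, pow_succ, stir]
  | succ n ih =>
    cases k with
    | zero =>
      have : Fk 0 = 1 := by simp [Fk]
      rw [this, coeff_one]
      simp [stir]
    | succ k =>
      have h := congrArg (coeff (n + 1)) (Fk_succ_mul k)
      rw [mul_sub, mul_one, map_sub, mul_comm (Fk (k+1)) (C ((k:ℚ)+1) * X),
        mul_assoc, coeff_C_mul, mul_comm X (Fk (k+1)), coeff_succ_mul_X,
        mul_comm X (Fk k), coeff_succ_mul_X, ih, ih] at h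
      have : coeff (n+1) (Fk (k+1)) = ((k:ℚ)+1) * stir n (k+1) + stir n k := by
        linarith
      rw [this, stir]
      push_cast
      ring
def bell (n : ℕ) : ℕ := ∑ k ∈ Finset.range (n + 1), stir n k

lemma stir_eq_zero {n k : ℕ} (h : n < k) : stir n k = 0 := by
  induction n generalizing k with
  | zero => cases k with
    | zero => omega
    | succ k => rfl
  | succ n ih =>
    cases k with
    | zero => omega
    | succ k =>
      show (k + 1) * stir n (k + 1) + stir n k = 0
      rw [ih (by omega), ih (by omega)]
      simp

lemma stir_rec (n k : ℕ) :
    stir (n + 1) (k + 1) = ∑ j ∈ Finset.range (n + 1), n.choose j * stir j k := by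
  induction n generalizing k with
  | zero => simp [stir]
  | succ n ih =>
    have h2 : (∑ i ∈ Finset.range (n + 1), n.choose (i + 1) * stir (i + 1) k) + stir 0 k
        = stir (n + 1) (k + 1) := by
      have e := Finset.sum_range_succ' (fun j => n.choose j * stir j k) (n + 1)
      rw [Finset.sum_range_succ] at e
      simp only [Nat.choose_succ_self, Nat.zero_eq, Nat.choose_zero_right, one_mul,
        zero_mul, add_zero] at e
      rw [ih]
      omega
    have h1 : ∑ j ∈ Finset.range (n + 2), (n + 1).choose j * stir j k
        = (∑ i ∈ Finset.range (n + 1), n.choose i * stir (i + 1) k) + stir (n + 1) (k + 1) := by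
      rw [Finset.sum_range_succ' (fun j => (n + 1).choose j * stir j k) (n + 1)]
      have : ∀ i, (n + 1).choose (i + 1) * stir (i + 1) k
          = n.choose i * stir (i + 1) k + n.choose (i + 1) * stir (i + 1) k := by
        intro i; rw [Nat.choose_succ_succ, add_mul]
      simp only [this, Finset.sum_add_distrib, Nat.choose_zero_right, one_mul, add_assoc, h2]
    rw [h1]
    cases k with
    | zero =>
      have z : ∀ i, stir (i + 1) 0 = 0 := fun i => rfl
      simp only [z, mul_zero, Finset.sum_const_zero, zero_add]
      show (0 + 1) * stir (n + 1) (0 + 1) + stir (n + 1) 0 = _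
      have h0 : stir (n + 1) 0 = 0 := rfl
      norm_num [h0]
    | succ k =>
      have hs : ∀ i, n.choose i * stir (i + 1) (k + 1)
          = (k + 1) * (n.choose i * stir i (k + 1)) + n.choose i * stir i k := by
        intro i
        show n.choose i * ((k + 1) * stir i (k + 1) + stir i k) = _
        ring
      simp only [hs, Finset.sum_add_distrib, ← Finset.mul_sum, ← ih]
      show (k + 1 + 1) * stir (n + 1) (k + 1 + 1) + stir (n + 1) (k + 1) = _
      ring

lemma bell_rec (n : ℕ) :
    bell (n + 1) = ∑ j ∈ Finset.range (n + 1), n.choose j * bell j := by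
  have h : bell (n + 1) = ∑ k ∈ Finset.range (n + 1), stir (n + 1) (k + 1) := by
    rw [bell, Finset.sum_range_succ' (fun k => stir (n + 1) k) (n + 1)]
    have : stir (n + 1) 0 = 0 := rfl
    rw [this, add_zero]
  rw [h]
  simp only [stir_rec]
  rw [Finset.sum_comm]
  refine Finset.sum_congr rfl fun j hj => ?_
  rw [← Finset.mul_sum, bell]
  congr 1
  have hj' : j ≤ n := by simpa using Nat.lt_succ_iff.mp (Finset.mem_range.mp hj)
  -- ∑_{k < n+1} stir j k = ∑_{k < j+1} stir j k since stir j k = 0 for k > j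
  rw [← Finset.sum_range_add_sum_Ico _ (Nat.add_le_add_right hj' 1)]
  have : ∑ k ∈ Finset.Ico (j + 1) (n + 1), stir j k = 0 := by
    refine Finset.sum_eq_zero fun k hk => stir_eq_zero ?_
    exact (Finset.mem_Ico.mp hk).1
  omega


lemma u0_eq_bell (n : ℕ) : u0 n = bell n := by
  induction n using Nat.strong_induction_on with
  | _ n ih =>
    match n, ih with
    | 0, _ =>
      rw [u0, bell, Finset.filter_true_of_mem (fun π _ => by simp [occ_12_3])]
      simp [stir, Finset.card_univ, Fintype.card_perm]
    | n + 1, ih =>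
      rw [u0_succ, bell_rec]
      exact Finset.sum_congr rfl fun j hj => by
        rw [ih j (by have := Finset.mem_range.mp hj; omega)]

/-- The OGF of the `12-3`-avoiding permutations is
`U₀(x) = ∑_{k ≥ 0} x^k / ((1-x)(1-2x)⋯(1-kx))`: the coefficient of `xⁿ` in this
series equals `u₀(n)`.  Since the `k`-th summand has order `k`, the coefficient of
`xⁿ` only involves the summands with `k ≤ n`, so the infinite sum may be truncated
at `k = n`. -/
theorem u0_ogf (n : ℕ) :
    (u0 n : ℚ) =
      coeff n (∑ k ∈ Finset.range (n + 1),
        X ^ k * (∏ m ∈ Finset.range k, (1 - C ((m : ℚ) + 1) * X))⁻¹) := by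
  rw [map_sum]
  have e1 : ∀ k, coeff n (X ^ k * (∏ m ∈ Finset.range k, (1 - C ((m : ℚ) + 1) * X))⁻¹)
      = (stir n k : ℚ) := fun k => coeff_Fk n k
  rw [Finset.sum_congr rfl fun k _ => e1 k, u0_eq_bell, bell]
  push_cast
  rfl
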